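/- Let (V, ν, τ, τ*) be a strongly complete PN space with τ, τ* sup-continuous and W a closed subspace. Then both the subspace (W, ν|_W, τ, τ*) and the quotient (V/W, ν̄, τ, τ*) are strongly complete; conversely, if any two of V, W, V/W are strongly complete, so is the third. -/

import Mathlib

open Filter Topology Set

/-- A distribution function in `Δ⁺`: nondecreasing, left-continuous,
vanishing on `(-∞,0]` and bounded by `1`. -/
structure DistFun where
  toFun : ℝ → ℝ
  mono' : Monotone toFun
  leftCont' : ∀ x, Filter.Tendsto toFun (nhdsWithin x (Set.Iio x)) (nhds (toFun x))
  zero' : ∀ x ≤ (0 : ℝ), toFun x = 0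
  le_one' : ∀ x, toFun x ≤ 1

instance : CoeFun DistFun (fun _ => ℝ → ℝ) := ⟨DistFun.toFun⟩

/-- Pointwise order on `Δ⁺`. -/
instance : LE DistFun := ⟨fun F G => ∀ x, F.toFun x ≤ G.toFun x⟩

/-- The unit step distribution function `ε_a` for `a ≥ 0`. -/
noncomputable def unitStep (a : ℝ) (_ha : 0 ≤ a) : DistFun where
  toFun x := if x ≤ a then 0 else 1
  mono' := by
    intro x y hxy
    by_cases hx : x ≤ a <;> by_cases hy : y ≤ a <;> simp [hx, hy] <;> linarith
  leftCont' := by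
    intro x
    by_cases hx : x ≤ a
    · have h : (fun y => if y ≤ a then (0:ℝ) else 1) =ᶠ[nhdsWithin x (Set.Iio x)]
          fun _ => (0:ℝ) := by
        filter_upwards [self_mem_nhdsWithin] with y hy
        exact if_pos ((le_of_lt hy).trans hx)
      simpa [if_pos hx] using (tendsto_const_nhds (α := ℝ)).congr' h.symm
    · have hax : a < x := not_le.mp hx
      have h : (fun y => if y ≤ a then (0:ℝ) else 1) =ᶠ[nhdsWithin x (Set.Iio x)]
          fun _ => (1:ℝ) := by
        filter_upwards [(eventually_gt_nhds hax).filter_mono nhdsWithin_le_nhds] with y hy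
        exact if_neg (not_le.mpr hy)
      simpa [if_neg hx] using (tendsto_const_nhds (α := ℝ)).congr' h.symm
  zero' := fun x hx => if_pos (hx.trans _ha)
  le_one' := by intro x; by_cases h : x ≤ a <;> simp [h]

/-- The maximal element `ε₀` of `Δ⁺`. -/
noncomputable def eps0 : DistFun := unitStep 0 le_rfl

/-- The one-sided Lévy condition `(F,G;h)`. -/
def levyCond (F G : DistFun) (h : ℝ) : Prop :=
  ∀ x : ℝ, -(1/h) < x → x < 1/h →
    F.toFun (x - h) - h ≤ G.toFun x ∧ G.toFun x ≤ F.toFun (x + h) + h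

/-- The Sibley (modified Lévy) metric on `Δ⁺`. -/
noncomputable def sibley (F G : DistFun) : ℝ :=
  sInf {h : ℝ | 0 < h ∧ h ≤ 1 ∧ levyCond F G h ∧ levyCond G F h}

/-- Triangle function: associative, commutative, nondecreasing binary
operation on `Δ⁺` with identity `ε₀`. -/
structure IsTriangleFun (τ : DistFun → DistFun → DistFun) : Prop where
  comm : ∀ F G, τ F G = τ G F
  assoc : ∀ F G H, τ (τ F G) H = τ F (τ G H)
  mono : ∀ F G H, F ≤ G → τ F H ≤ τ G H
  ident : ∀ F, τ F eps0 = F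

/-- Continuity of a triangle function w.r.t. the Sibley metric (sequential form). -/
def TriCont (τ : DistFun → DistFun → DistFun) : Prop :=
  ∀ (F G : ℕ → DistFun) (F₀ G₀ : DistFun),
    Filter.Tendsto (fun n => sibley (F n) F₀) Filter.atTop (nhds 0) →
    Filter.Tendsto (fun n => sibley (G n) G₀) Filter.atTop (nhds 0) →
    Filter.Tendsto (fun n => sibley (τ (F n) (G n)) (τ F₀ G₀)) Filter.atTop (nhds 0)

/-- Sup-continuity of a triangle function: `τ (sup_i F_i) G = sup_i τ (F_i) G`
(pointwise). -/
def SupCont (τ : DistFun → DistFun → DistFun) : Prop :=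
  ∀ {ι : Type} [Nonempty ι] (F : ι → DistFun) (S G : DistFun),
    (∀ x, S.toFun x = ⨆ i, (F i).toFun x) →
    ∀ x, (τ S G).toFun x = ⨆ i, (τ (F i) G).toFun x

/-- Domination `τ₁ ≫ τ₂` of triangle functions. -/
def Dominates (τ₁ τ₂ : DistFun → DistFun → DistFun) : Prop :=
  ∀ F₁ F₂ G₁ G₂, τ₂ (τ₁ F₁ F₂) (τ₁ G₁ G₂) ≤ τ₁ (τ₂ F₁ G₁) (τ₂ F₂ G₂)

/-- A probabilistic pseudo-normed space `(V, ν, τ, τ*)`. -/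
structure IsPPNSpace {V : Type*} [AddCommGroup V] [Module ℝ V]
    (ν : V → DistFun) (τ τs : DistFun → DistFun → DistFun) : Prop where
  tri : IsTriangleFun τ
  tri_s : IsTriangleFun τs
  cont : TriCont τ
  cont_s : TriCont τs
  tau_le : ∀ F G, τ F G ≤ τs F G
  N1' : ν 0 = eps0
  N2 : ∀ p, ν (-p) = ν p
  N3 : ∀ p q, τ (ν p) (ν q) ≤ ν (p + q)
  N4 : ∀ (p : V) (α : ℝ), 0 ≤ α → α ≤ 1 →
    ν p ≤ τs (ν (α • p)) (ν ((1 - α) • p))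

/-- A probabilistic normed space `(V, ν, τ, τ*)`. -/
structure IsPNSpace {V : Type*} [AddCommGroup V] [Module ℝ V]
    (ν : V → DistFun) (τ τs : DistFun → DistFun → DistFun)
    extends IsPPNSpace ν τ τs : Prop where
  N1 : ∀ p, ν p = eps0 ↔ p = 0

/-- The strong topology of a PN space, generated by the strong neighbourhoods
`N_p(t) = {q : ν_{q-p}(t) > 1 - t}`. -/
def strongTop {V : Type*} [AddCommGroup V] (ν : V → DistFun) : TopologicalSpace V :=
  TopologicalSpace.generateFrom
    {S | ∃ (p : V) (t : ℝ), 0 < t ∧ S = {q | 1 - t < (ν (q - p)).toFun t}}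

/-- A set is closed in the strong topology. -/
def StrongClosed {V : Type*} [AddCommGroup V] (ν : V → DistFun) (S : Set V) : Prop :=
  @IsClosed V (strongTop ν) S

/-- A strong Cauchy sequence. -/
def StrongCauchy {V : Type*} [AddCommGroup V] (ν : V → DistFun) (p : ℕ → V) : Prop :=
  ∀ t : ℝ, 0 < t → ∃ N : ℕ, ∀ m n, N ≤ m → N ≤ n → 1 - t < (ν (p n - p m)).toFun t

/-- Strong convergence of a sequence to a point. -/
def StrongConv {V : Type*} [AddCommGroup V] (ν : V → DistFun) (p : ℕ → V) (x : V) : Prop :=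
  ∀ t : ℝ, 0 < t → ∃ N : ℕ, ∀ n, N ≤ n → 1 - t < (ν (p n - x)).toFun t

/-- Strong completeness. -/
def StrongComplete {V : Type*} [AddCommGroup V] (ν : V → DistFun) : Prop :=
  ∀ p : ℕ → V, StrongCauchy ν p → ∃ x, StrongConv ν p x

/-!
The sequential arguments run on one tool: continuity of `τ` at `(ε₀, ε₀)` gives, for every
`t > 0`, an `η > 0` such that `ν_a(η) > 1 - η` and `ν_b(η) > 1 - η` force
`ν_{a+b}(t) > 1 - t`; iterating it gives a scale `η_k → 0` along which increments can be summed.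

Limits in `V` of sequences in `W` stay in `W` because `W` is strongly closed, and project to limits
in `V/W` because `ν ≤ ν̄ ∘ π` for the projection `π`. A Cauchy sequence in `V/W` has a subsequence
whose increments are small on that scale; lifting the increments to `V` gives a Cauchy sequence
there, whose limit projects to the limit of the subsequence, hence of the whole sequence (the
triangle inequality of `ν̄` comes from the sup-continuity of `τ`). Conversely, if `W` and `V/W` are
complete and `(p_n)` is Cauchy in `V`, its image converges to some `π x`; along a subsequence one
finds `w_k ∈ W` with `p_{n_k} + w_k → x`, so `(w_k)` is Cauchy, converges to some `w ∈ W`, and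
`p_{n_k} → x - w`.
-/

namespace DistFun

lemma nonneg (F : DistFun) (x : ℝ) : 0 ≤ F.toFun x := by
  simpa [F.zero' _ (min_le_right x 0)] using F.mono' (min_le_left x 0)

/-- `(ν q).Near t` says that `q` lies in the strong neighbourhood `N_θ(t)` of the origin. -/
def Near (F : DistFun) (t : ℝ) : Prop := 1 - t < F.toFun t

lemma Near.mono {F : DistFun} {s t : ℝ} (hF : F.Near s) (hst : s ≤ t) : F.Near t :=
  (show 1 - t ≤ 1 - s by linarith).trans_lt (hF.trans_le (F.mono' hst))

lemma Near.of_le {F G : DistFun} {t : ℝ} (hF : F.Near t) (hFG : F ≤ G) : G.Near t :=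
  hF.trans_le (hFG t)

lemma near_of_one_lt (F : DistFun) {t : ℝ} (ht : 1 < t) : F.Near t :=
  lt_of_lt_of_le (by linarith) (F.nonneg t)

end DistFun

open DistFun

lemma eps0_apply (x : ℝ) : eps0.toFun x = if x ≤ 0 then 0 else 1 := rfl

lemma eps0_near {t : ℝ} (ht : 0 < t) : eps0.Near t := by
  simp [Near, eps0_apply, ht.not_ge, ht]

lemma bddBelow_sibley_set (F G : DistFun) :
    BddBelow {h : ℝ | 0 < h ∧ h ≤ 1 ∧ levyCond F G h ∧ levyCond G F h} :=
  ⟨0, fun _ hh => hh.1.le⟩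

lemma sibley_nonneg (F G : DistFun) : 0 ≤ sibley F G :=
  Real.sInf_nonneg fun _ hh => hh.1.le

lemma levyCond_one (F G : DistFun) : levyCond F G 1 := fun x _ _ =>
  ⟨by linarith [F.le_one' (x - 1), G.nonneg x], by linarith [G.le_one' x, F.nonneg (x + 1)]⟩

lemma one_mem_sibley_set (F G : DistFun) :
    1 ∈ {h : ℝ | 0 < h ∧ h ≤ 1 ∧ levyCond F G h ∧ levyCond G F h} :=
  ⟨one_pos, le_rfl, levyCond_one F G, levyCond_one G F⟩

lemma sibley_le_one (F G : DistFun) : sibley F G ≤ 1 :=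
  csInf_le (bddBelow_sibley_set F G) (one_mem_sibley_set F G)

lemma sibley_self (F : DistFun) : sibley F F = 0 := by
  have hlevy : ∀ h, 0 < h → levyCond F F h := fun h hh x _ _ =>
    ⟨by linarith [F.mono' (show x - h ≤ x by linarith)],
      by linarith [F.mono' (show x ≤ x + h by linarith)]⟩
  have hset : {h : ℝ | 0 < h ∧ h ≤ 1 ∧ levyCond F F h ∧ levyCond F F h} = Ioc 0 1 := by
    ext h
    exact ⟨fun hh => ⟨hh.1, hh.2.1⟩, fun hh => ⟨hh.1, hh.2, hlevy h hh.1, hlevy h hh.1⟩⟩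
  rw [sibley, hset, csInf_Ioc one_pos]

lemma sibley_eps0_le_of_near {F : DistFun} {t : ℝ} (ht : 0 < t) (hF : F.Near t) :
    sibley F eps0 ≤ t := by
  rcases le_or_gt t 1 with ht1 | ht1
  swap
  · exact (sibley_le_one F eps0).trans ht1.le
  unfold Near at hF
  refine csInf_le (bddBelow_sibley_set _ _)
    ⟨ht, ht1, fun x _ _ => ⟨?_, ?_⟩, fun x _ _ => ⟨?_, ?_⟩⟩ <;> simp only [eps0_apply] <;> split_ifs
  · linarith [F.zero' (x - t) (by linarith)]
  · linarith [F.le_one' (x - t)]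
  · linarith [F.nonneg (x + t)]
  · linarith [F.mono' (show t ≤ x + t by linarith), hF]
  · linarith [F.nonneg x]
  · linarith [F.mono' (show t ≤ x by linarith), hF]
  · linarith [F.zero' x (by linarith)]
  · linarith [F.le_one' x]

/-- This is where the left-continuity of distribution functions enters. -/
lemma exists_forall_sibley_lt_near {F : DistFun} {t : ℝ} (ht : 0 < t) (hF : F.Near t) :
    ∃ δ > 0, ∀ H : DistFun, sibley H F < δ → H.Near t := by
  rcases le_or_gt t 1 with ht1 | ht1
  swap
  · exact ⟨1, one_pos, fun H _ => H.near_of_one_lt ht1⟩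
  obtain ⟨s, hFs, hst⟩ : ∃ s, 1 - t < F.toFun s ∧ s < t :=
    (((F.leftCont' t).eventually (eventually_gt_nhds hF)).and self_mem_nhdsWithin).exists
  refine ⟨min (t - s) (F.toFun s - (1 - t)), lt_min (by linarith) (by linarith), fun H hH => ?_⟩
  obtain ⟨h, ⟨hpos, -, -, hFH⟩, hlt⟩ :=
    exists_lt_of_csInf_lt ⟨1, one_mem_sibley_set H F⟩ hH
  have hts : h < t - s := hlt.trans_le (min_le_left _ _)
  have hFsh : h < F.toFun s - (1 - t) := hlt.trans_le (min_le_right _ _)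
  have ht_lt : t < 1 / h := by
    rw [lt_div_iff₀ hpos]
    nlinarith [F.le_one' s]
  have hlow := (hFH t (by linarith [show (0 : ℝ) < 1 / h by positivity]) ht_lt).1
  have hmono := F.mono' (show s ≤ t - h by linarith)
  show 1 - t < H.toFun t
  linarith

lemma TriCont.exists_near {τ : DistFun → DistFun → DistFun} (hc : TriCont τ)
    {F₀ G₀ : DistFun} {t : ℝ} (ht : 0 < t) (hFG : (τ F₀ G₀).Near t) :
    ∃ δ > 0, ∀ F G, sibley F F₀ < δ → sibley G G₀ < δ → (τ F G).Near t := by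
  obtain ⟨ε, hε, hnear⟩ := exists_forall_sibley_lt_near ht hFG
  by_contra! hcon
  choose F G hF hG hfar using fun n : ℕ => hcon (1 / ((n : ℝ) + 1)) Nat.one_div_pos_of_nat
  have hlim : ∀ (H : ℕ → DistFun) (H₀ : DistFun), (∀ n, sibley (H n) H₀ < 1 / ((n : ℝ) + 1)) →
      Tendsto (fun n => sibley (H n) H₀) atTop (𝓝 0) := fun H H₀ hH =>
    squeeze_zero (fun n => sibley_nonneg _ _) (fun n => (hH n).le)
      tendsto_one_div_add_atTop_nhds_zero_nat
  obtain ⟨n, hn⟩ :=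
    ((hc F G F₀ G₀ (hlim F F₀ hF) (hlim G G₀ hG)).eventually_lt_const hε).exists
  exact hfar n (hnear _ hn)

structure TriangleIneq {V : Type*} [AddCommGroup V] (ν : V → DistFun)
    (τ : DistFun → DistFun → DistFun) : Prop where
  isTriangleFun : IsTriangleFun τ
  triCont : TriCont τ
  le_add : ∀ a b, τ (ν a) (ν b) ≤ ν (a + b)

lemma IsPPNSpace.triangleIneq {V : Type*} [AddCommGroup V] [Module ℝ V] {ν : V → DistFun}
    {τ τs : DistFun → DistFun → DistFun} (h : IsPPNSpace ν τ τs) : TriangleIneq ν τ :=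
  ⟨h.tri, h.cont, h.N3⟩

namespace TriangleIneq

variable {V : Type*} [AddCommGroup V] {ν : V → DistFun} {τ : DistFun → DistFun → DistFun}

lemma exists_near_add (hν : TriangleIneq ν τ) {t : ℝ} (ht : 0 < t) :
    ∃ η > 0, ∀ a b, (ν a).Near η → (ν b).Near η → (ν (a + b)).Near t := by
  obtain ⟨δ, hδ, hnear⟩ := hν.triCont.exists_near ht
    (F₀ := eps0) (G₀ := eps0) (by rw [hν.isTriangleFun.ident]; exact eps0_near ht)
  refine ⟨δ / 2, half_pos hδ, fun a b ha hb => (hnear _ _ ?_ ?_).of_le (hν.le_add a b)⟩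
  · linarith [sibley_eps0_le_of_near (half_pos hδ) ha]
  · linarith [sibley_eps0_le_of_near (half_pos hδ) hb]

lemma exists_near_add_of_near (hν : TriangleIneq ν τ) {b : V} {t : ℝ} (ht : 0 < t)
    (hb : (ν b).Near t) : ∃ η > 0, ∀ a, (ν a).Near η → (ν (a + b)).Near t := by
  obtain ⟨δ, hδ, hnear⟩ := hν.triCont.exists_near ht
    (F₀ := eps0) (G₀ := ν b) (by rwa [hν.isTriangleFun.comm, hν.isTriangleFun.ident])
  refine ⟨δ / 2, half_pos hδ, fun a ha => (hnear _ _ ?_ ?_).of_le (hν.le_add a b)⟩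
  · linarith [sibley_eps0_le_of_near (half_pos hδ) ha]
  · rwa [sibley_self]

end TriangleIneq

section Sequences

variable {V : Type*} [AddCommGroup V] {ν : V → DistFun} {τ : DistFun → DistFun → DistFun}

lemma StrongCauchy.strongConv_of_subseq (hν : TriangleIneq ν τ) {p : ℕ → V}
    (hp : StrongCauchy ν p) {φ : ℕ → ℕ} (hφ : StrictMono φ) {x : V}
    (hx : StrongConv ν (fun n => p (φ n)) x) : StrongConv ν p x := by
  intro t ht
  obtain ⟨η, hη, hnear⟩ := hν.exists_near_add ht
  obtain ⟨N, hN⟩ := hp η hη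
  obtain ⟨K, hK⟩ := hx η hη
  have hN' : N ≤ φ (max K N) := (le_max_right K N).trans hφ.le_apply
  refine ⟨φ (max K N), fun n hn => ?_⟩
  have h := hnear _ _ (hN _ n hN' (hN'.trans hn)) (hK _ (le_max_left K N))
  rwa [sub_add_sub_cancel] at h

lemma StrongConv.strongCauchy (hν : TriangleIneq ν τ) (hneg : ∀ a, ν (-a) = ν a)
    {p : ℕ → V} {x : V} (hx : StrongConv ν p x) : StrongCauchy ν p := by
  intro t ht
  obtain ⟨η, hη, hnear⟩ := hν.exists_near_add ht
  obtain ⟨N, hN⟩ := hx η hη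
  refine ⟨N, fun m n hm hn => ?_⟩
  have h := hnear _ _ (hN n hn) (by rw [hneg]; exact hN m hm)
  rwa [← sub_eq_add_neg, sub_sub_sub_cancel_right] at h

lemma StrongCauchy.sub (hν : TriangleIneq ν τ) (hneg : ∀ a, ν (-a) = ν a) {p q : ℕ → V}
    (hp : StrongCauchy ν p) (hq : StrongCauchy ν q) : StrongCauchy ν (fun n => p n - q n) := by
  intro t ht
  obtain ⟨η, hη, hnear⟩ := hν.exists_near_add ht
  obtain ⟨N₁, hN₁⟩ := hp η hη
  obtain ⟨N₂, hN₂⟩ := hq η hη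
  refine ⟨max N₁ N₂, fun m n hm hn => ?_⟩
  have h := hnear _ _ (hN₁ m n (le_of_max_le_left hm) (le_of_max_le_left hn))
    (by rw [hneg]; exact hN₂ m n (le_of_max_le_right hm) (le_of_max_le_right hn))
  rwa [← sub_eq_add_neg, sub_sub_sub_comm] at h

lemma StrongConv.sub (hν : TriangleIneq ν τ) (hneg : ∀ a, ν (-a) = ν a) {p q : ℕ → V}
    {x y : V} (hp : StrongConv ν p x) (hq : StrongConv ν q y) :
    StrongConv ν (fun n => p n - q n) (x - y) := by
  intro t ht
  obtain ⟨η, hη, hnear⟩ := hν.exists_near_add ht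
  obtain ⟨N₁, hN₁⟩ := hp η hη
  obtain ⟨N₂, hN₂⟩ := hq η hη
  refine ⟨max N₁ N₂, fun n hn => ?_⟩
  have h := hnear _ _ (hN₁ n (le_of_max_le_left hn))
    (by rw [hneg]; exact hN₂ n (le_of_max_le_right hn))
  rwa [← sub_eq_add_neg, sub_sub_sub_comm] at h

lemma StrongCauchy.exists_subseq_near_succ_sub {p : ℕ → V} (hp : StrongCauchy ν p)
    {ε : ℕ → ℝ} (hε : ∀ k, 0 < ε k) :
    ∃ φ : ℕ → ℕ, StrictMono φ ∧ ∀ k, (ν (p (φ (k + 1)) - p (φ k))).Near (ε k) := by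
  obtain ⟨φ, hφ, hnear⟩ := extraction_forall_of_eventually'
    (P := fun k m => ∀ n ≥ m, (ν (p n - p m)).Near (ε k)) fun k => by
      obtain ⟨N, hN⟩ := hp (ε k) (hε k)
      exact ⟨N, fun m hm n hn => hN m n hm (hm.trans hn)⟩
  exact ⟨φ, hφ, fun k => hnear k _ (hφ k.lt_succ_self).le⟩

lemma TriangleIneq.exists_near_chain (hν : TriangleIneq ν τ) :
    ∃ η : ℕ → ℝ, (∀ k, 0 < η k) ∧ Antitone η ∧ Tendsto η atTop (𝓝 0) ∧
      ∀ k a b, (ν a).Near (η (k + 1)) → (ν b).Near (η (k + 1)) → (ν (a + b)).Near (η k) := by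
  have hstep : ∀ s : {s : ℝ // 0 < s}, ∃ s' : {s : ℝ // 0 < s}, (s' : ℝ) ≤ s / 2 ∧
      ∀ a b, (ν a).Near s' → (ν b).Near s' → (ν (a + b)).Near s := fun ⟨s, hs⟩ => by
    obtain ⟨η, hη, hnear⟩ := hν.exists_near_add hs
    exact ⟨⟨min η (s / 2), lt_min hη (half_pos hs)⟩, min_le_right _ _, fun a b ha hb =>
      hnear a b (ha.mono (min_le_left _ _)) (hb.mono (min_le_left _ _))⟩
  choose E hE_le hE_near using hstep
  set η : ℕ → ℝ := fun k => (E^[k] ⟨1, one_pos⟩ : ℝ) with hη_def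
  have hη_succ : ∀ k, η (k + 1) = E (E^[k] ⟨1, one_pos⟩) := fun k => by
    simp only [hη_def, Function.iterate_succ_apply']
  have hη_pos : ∀ k, 0 < η k := fun k => (E^[k] ⟨1, one_pos⟩).2
  have hη_half : ∀ k, η (k + 1) ≤ η k / 2 := fun k => (hη_succ k).symm ▸ hE_le _
  have hη_pow : ∀ k, η k ≤ (1 / 2) ^ k := fun k => by
    induction k with
    | zero => simp [hη_def]
    | succ k ih => rw [pow_succ]; linarith [hη_half k]
  refine ⟨η, hη_pos, antitone_nat_of_succ_le fun k => by linarith [hη_half k, hη_pos k],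
    squeeze_zero (fun k => (hη_pos k).le) hη_pow
      (tendsto_pow_atTop_nhds_zero_of_lt_one (by norm_num) (by norm_num)), fun k a b => ?_⟩
  rw [hη_succ]
  exact hE_near _ a b

lemma near_sub_of_near_chain (hneg : ∀ a, ν (-a) = ν a) {η : ℕ → ℝ}
    (hη : ∀ k a b, (ν a).Near (η (k + 1)) → (ν b).Near (η (k + 1)) → (ν (a + b)).Near (η k))
    {q : ℕ → V} (hq : ∀ k, (ν (q (k + 1) - q k)).Near (η (k + 1))) (g m : ℕ) :
    (ν (q (m + g) - q m)).Near (η m) := by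
  induction g generalizing m with
  | zero =>
    have h := hη m _ _ (hq m) (by rw [hneg]; exact hq m)
    rwa [add_neg_cancel, ← sub_self (q m), ← add_zero m] at h
  | succ g ih =>
    have h := hη m _ _ (hq m) (ih (m + 1))
    rwa [sub_add_sub_cancel', add_right_comm, add_assoc] at h

lemma TriangleIneq.exists_strongCauchy_of_near_succ_sub (hν : TriangleIneq ν τ)
    (hneg : ∀ a, ν (-a) = ν a) : ∃ ε : ℕ → ℝ, (∀ k, 0 < ε k) ∧
      ∀ q : ℕ → V, (∀ k, (ν (q (k + 1) - q k)).Near (ε k)) → StrongCauchy ν q := by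
  obtain ⟨η, hη_pos, hη_anti, hη_lim, hη⟩ := hν.exists_near_chain
  refine ⟨fun k => η (k + 1), fun k => hη_pos (k + 1), fun q hq t ht => ?_⟩
  obtain ⟨K, hK⟩ := (hη_lim.eventually_lt_const ht).exists
  have hnear : ∀ m n, K ≤ m → m ≤ n → (ν (q n - q m)).Near t := fun m n hKm hmn => by
    obtain ⟨g, rfl⟩ := Nat.exists_eq_add_of_le hmn
    exact (near_sub_of_near_chain hneg hη hq g m).mono ((hη_anti hKm).trans hK.le)
  refine ⟨K, fun m n hm hn => ?_⟩
  rcases le_total m n with hmn | hnm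
  · exact hnear m n hm hmn
  · show (ν (q n - q m)).Near t
    rw [← neg_sub, hneg]
    exact hnear n m hn hnm

lemma StrongCauchy.comp {p : ℕ → V} (hp : StrongCauchy ν p) {φ : ℕ → ℕ} (hφ : StrictMono φ) :
    StrongCauchy ν (fun n => p (φ n)) := fun t ht => by
  obtain ⟨N, hN⟩ := hp t ht
  exact ⟨N, fun m n hm hn => hN _ _ (hm.trans hφ.le_apply) (hn.trans hφ.le_apply)⟩

lemma StrongConv.tendsto_strongTop (hν : TriangleIneq ν τ) {p : ℕ → V} {x : V}
    (hx : StrongConv ν p x) : Tendsto p atTop (@nhds V (strongTop ν) x) := by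
  rw [strongTop, TopologicalSpace.tendsto_nhds_generateFrom_iff]
  rintro _ ⟨p₀, t, ht, rfl⟩ hxp₀
  obtain ⟨η, hη, hnear⟩ := hν.exists_near_add_of_near ht hxp₀
  obtain ⟨N, hN⟩ := hx η hη
  filter_upwards [eventually_ge_atTop N] with n hn
  have h := hnear _ (hN n hn)
  rwa [sub_add_sub_cancel] at h

lemma StrongClosed.mem_of_strongConv {S : Set V} (hS : StrongClosed ν S) (hν : TriangleIneq ν τ)
    {p : ℕ → V} {x : V} (hx : StrongConv ν p x) (hp : ∀ n, p n ∈ S) : x ∈ S :=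
  letI := strongTop ν
  IsClosed.mem_of_tendsto hS (hx.tendsto_strongTop hν) (Eventually.of_forall hp)

end Sequences

lemma bddAbove_range_toFun {ι : Type*} (F : ι → DistFun) (x : ℝ) :
    BddAbove (range fun i => (F i).toFun x) :=
  ⟨1, by rintro _ ⟨i, rfl⟩; exact (F i).le_one' x⟩

/-- `ν'` is the quotient probabilistic norm `ν̄` of `ν` on `V ⧸ W`. -/
def IsQuotientNorm {R V : Type*} [Ring R] [AddCommGroup V] [Module R V] (ν : V → DistFun)
    (W : Submodule R V) (ν' : V ⧸ W → DistFun) : Prop :=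
  ∀ (p : V) (x : ℝ), (ν' (W.mkQ p)).toFun x = ⨆ q : W, (ν (p + (q : V))).toFun x

namespace IsQuotientNorm

variable {R V : Type*} [Ring R] [AddCommGroup V] [Module R V] {ν : V → DistFun}
  {W : Submodule R V} {ν' : V ⧸ W → DistFun} {τ : DistFun → DistFun → DistFun}

lemma le_mkQ (hν' : IsQuotientNorm ν W ν') (a : V) : ν a ≤ ν' (W.mkQ a) := fun x => by
  rw [hν']
  simpa using le_ciSup (bddAbove_range_toFun (fun q : W => ν (a + q)) x) 0

lemma exists_near_add_of_near_mkQ (hν' : IsQuotientNorm ν W ν') {a : V} {t : ℝ}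
    (ha : (ν' (W.mkQ a)).Near t) : ∃ w : W, (ν (a + w)).Near t := by
  unfold Near at ha
  rw [hν'] at ha
  exact exists_lt_of_lt_ciSup ha

lemma exists_near_lift (hν' : IsQuotientNorm ν W ν') {y : V ⧸ W} {t : ℝ} (hy : (ν' y).Near t) :
    ∃ z, W.mkQ z = y ∧ (ν z).Near t := by
  obtain ⟨a, rfl⟩ := W.mkQ_surjective y
  obtain ⟨w, hw⟩ := hν'.exists_near_add_of_near_mkQ hy
  exact ⟨a + w, by simp, hw⟩

lemma strongCauchy_mkQ (hν' : IsQuotientNorm ν W ν') {p : ℕ → V} (hp : StrongCauchy ν p) :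
    StrongCauchy ν' (fun n => W.mkQ (p n)) := fun t ht => by
  obtain ⟨N, hN⟩ := hp t ht
  refine ⟨N, fun m n hm hn => ?_⟩
  rw [← map_sub]
  exact (hN m n hm hn).trans_le (hν'.le_mkQ _ t)

lemma strongConv_mkQ (hν' : IsQuotientNorm ν W ν') {p : ℕ → V} {x : V} (hx : StrongConv ν p x) :
    StrongConv ν' (fun n => W.mkQ (p n)) (W.mkQ x) := fun t ht => by
  obtain ⟨N, hN⟩ := hx t ht
  refine ⟨N, fun n hn => ?_⟩
  rw [← map_sub]
  exact (hN n hn).trans_le (hν'.le_mkQ _ t)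

/-- Lifting the increments, rather than the terms, keeps the increments small. -/
lemma exists_lift_near_succ_sub (hν' : IsQuotientNorm ν W ν') {y : ℕ → V ⧸ W} {ε : ℕ → ℝ}
    (hy : ∀ k, (ν' (y (k + 1) - y k)).Near (ε k)) :
    ∃ z : ℕ → V, (∀ k, W.mkQ (z k) = y k) ∧ ∀ k, (ν (z (k + 1) - z k)).Near (ε k) := by
  choose e he_mk he_near using fun k => hν'.exists_near_lift (hy k)
  obtain ⟨z₀, hz₀⟩ := W.mkQ_surjective (y 0)
  refine ⟨fun k => z₀ + ∑ i ∈ Finset.range k, e i, fun k => ?_, fun k => ?_⟩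
  · simp only [map_add, map_sum, he_mk, Finset.sum_range_sub, hz₀, add_sub_cancel]
  · simpa [Finset.sum_range_succ] using he_near k

lemma exists_subseq_add_strongConv (hν' : IsQuotientNorm ν W ν') {p : ℕ → V} {x : V}
    (hx : StrongConv ν' (fun n => W.mkQ (p n)) (W.mkQ x)) :
    ∃ φ : ℕ → ℕ, ∃ w : ℕ → W, StrictMono φ ∧ StrongConv ν (fun k => p (φ k) + w k) x := by
  obtain ⟨φ, hφ, hφ_near⟩ := extraction_forall_of_eventually'
    (P := fun k n => (ν' (W.mkQ (p n) - W.mkQ x)).Near (1 / ((k : ℝ) + 1)))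
    fun k => hx _ Nat.one_div_pos_of_nat
  choose w hw using fun k =>
    hν'.exists_near_add_of_near_mkQ (a := p (φ k) - x) (by rw [map_sub]; exact hφ_near k)
  refine ⟨φ, w, hφ, fun t ht => ?_⟩
  obtain ⟨K, hK⟩ := exists_nat_one_div_lt ht
  refine ⟨K, fun k hk => ?_⟩
  rw [add_sub_right_comm]
  refine (hw k).mono (le_trans ?_ hK.le)
  gcongr

/-- The supremum is reindexed over a set of distribution functions because `SupCont` only
quantifies over index types in `Type`. -/
lemma iSup_range_apply (hν' : IsQuotientNorm ν W ν') (a : V) (x : ℝ) :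
    (ν' (W.mkQ a)).toFun x = ⨆ F : range fun q : W => ν (a + q), (F : DistFun).toFun x := by
  rw [hν', iSup_range' (fun F : DistFun => F.toFun x)]

lemma triangleIneq (hν' : IsQuotientNorm ν W ν') (hν : TriangleIneq ν τ) (hτ : SupCont τ) :
    TriangleIneq ν' τ := by
  refine ⟨hν.isTriangleFun, hν.triCont, fun A B x => ?_⟩
  obtain ⟨a, rfl⟩ := W.mkQ_surjective A
  obtain ⟨b, rfl⟩ := W.mkQ_surjective B
  rw [hτ _ _ _ (hν'.iSup_range_apply a)]
  refine ciSup_le ?_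
  rintro ⟨_, u, rfl⟩
  rw [hν.isTriangleFun.comm, hτ _ _ _ (hν'.iSup_range_apply b)]
  refine ciSup_le ?_
  rintro ⟨_, v, rfl⟩
  calc (τ (ν (b + v)) (ν (a + u))).toFun x ≤ (ν (b + v + (a + u))).toFun x := hν.le_add _ _ x
    _ ≤ (ν' (W.mkQ (b + v + (a + u)))).toFun x := hν'.le_mkQ _ x
    _ = (ν' (W.mkQ a + W.mkQ b)).toFun x := by
      congr 2
      simp [(Submodule.Quotient.mk_eq_zero W).mpr u.2, (Submodule.Quotient.mk_eq_zero W).mpr v.2,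
        add_comm]

end IsQuotientNorm

section Completeness

variable {R V : Type*} [Ring R] [AddCommGroup V] [Module R V] {ν : V → DistFun}
  {τ : DistFun → DistFun → DistFun} {W : Submodule R V}

theorem strongComplete_submodule (hν : TriangleIneq ν τ) (hW : StrongClosed ν (W : Set V))
    (hV : StrongComplete ν) : StrongComplete (fun w : W => ν w) := fun p hp => by
  obtain ⟨x, hx⟩ := hV (fun n => p n) hp
  exact ⟨⟨x, hW.mem_of_strongConv hν hx fun n => (p n).2⟩, hx⟩

theorem strongComplete_quotient (hν : TriangleIneq ν τ) (hneg : ∀ a, ν (-a) = ν a)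
    (hτ : SupCont τ) {ν' : V ⧸ W → DistFun} (hν' : IsQuotientNorm ν W ν')
    (hV : StrongComplete ν) : StrongComplete ν' := fun y hy => by
  obtain ⟨ε, hε, hcauchy⟩ := hν.exists_strongCauchy_of_near_succ_sub hneg
  obtain ⟨φ, hφ, hφ_near⟩ := hy.exists_subseq_near_succ_sub hε
  obtain ⟨z, hz_mk, hz_near⟩ := hν'.exists_lift_near_succ_sub hφ_near
  obtain ⟨x, hx⟩ := hV z (hcauchy z hz_near)
  refine ⟨W.mkQ x, hy.strongConv_of_subseq (hν'.triangleIneq hν hτ) hφ ?_⟩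
  simpa only [hz_mk] using hν'.strongConv_mkQ hx

theorem strongComplete_of_submodule_of_quotient (hν : TriangleIneq ν τ)
    (hneg : ∀ a, ν (-a) = ν a) {ν' : V ⧸ W → DistFun} (hν' : IsQuotientNorm ν W ν')
    (hW : StrongComplete (fun w : W => ν w)) (hQ : StrongComplete ν') : StrongComplete ν :=
    fun p hp => by
  obtain ⟨y, hy⟩ := hQ _ (hν'.strongCauchy_mkQ hp)
  obtain ⟨x, rfl⟩ := W.mkQ_surjective y
  obtain ⟨φ, w, hφ, hconv⟩ := hν'.exists_subseq_add_strongConv hy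
  have hw : StrongCauchy ν (fun k => (w k : V)) := by
    simpa using (hconv.strongCauchy hν hneg).sub hν hneg (hp.comp hφ)
  obtain ⟨w₀, hw₀⟩ := hW w hw
  refine ⟨x - w₀, hp.strongConv_of_subseq hν hφ ?_⟩
  simpa using hconv.sub hν hneg hw₀

end Completeness

theorem two_of_three_completeness_general {V : Type*} [AddCommGroup V] [Module ℝ V]
    (ν : V → DistFun) (τ τs : DistFun → DistFun → DistFun)
    (h : IsPNSpace ν τ τs) (hτ : SupCont τ)
    (W : Submodule ℝ V)
    (hW : StrongClosed ν (W : Set V))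
    (ν' : V ⧸ W → DistFun)
    (hν' : ∀ (p : V) (x : ℝ),
      (ν' (W.mkQ p)).toFun x = ⨆ q : W, (ν (p + (q : V))).toFun x) :
    (StrongComplete ν →
      StrongComplete (fun w : W => ν (w : V)) ∧ StrongComplete ν') ∧
    (StrongComplete ν → StrongComplete (fun w : W => ν (w : V)) → StrongComplete ν') ∧
    (StrongComplete ν → StrongComplete ν' → StrongComplete (fun w : W => ν (w : V))) ∧
    (StrongComplete (fun w : W => ν (w : V)) → StrongComplete ν' → StrongComplete ν) := by
  have hν := h.toIsPPNSpace.triangleIneq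
  have hsub := strongComplete_submodule hν hW
  have hquot := strongComplete_quotient hν h.N2 hτ hν'
  exact ⟨fun hV => ⟨hsub hV, hquot hV⟩, fun hV _ => hquot hV, fun hV _ => hsub hV,
    strongComplete_of_submodule_of_quotient hν h.N2 hν'⟩

theorem two_of_three_completeness {V : Type*} [AddCommGroup V] [Module ℝ V]
    (ν : V → DistFun) (τ τs : DistFun → DistFun → DistFun)
    (h : IsPNSpace ν τ τs) (hτ : SupCont τ) (hτs : SupCont τs)
    (W : Submodule ℝ V)
    (hW : StrongClosed ν (W : Set V))
    (ν' : V ⧸ W → DistFun)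
    (hν' : ∀ (p : V) (x : ℝ),
      (ν' (W.mkQ p)).toFun x = ⨆ q : W, (ν (p + (q : V))).toFun x) :
    (StrongComplete ν →
      StrongComplete (fun w : W => ν (w : V)) ∧ StrongComplete ν') ∧
    (StrongComplete ν → StrongComplete (fun w : W => ν (w : V)) → StrongComplete ν') ∧
    (StrongComplete ν → StrongComplete ν' → StrongComplete (fun w : W => ν (w : V))) ∧
    (StrongComplete (fun w : W => ν (w : V)) → StrongComplete ν' → StrongComplete ν) :=
  two_of_three_completeness_general ν τ τs h hτ W hW ν' hν'
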